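/- arXiv:2212.08366 — 8 statements merged into one kernel-verified Lean document; each statement's English description precedes it below -/
import Mathlib

section
/- Let N ≥ 1 be an integer, 0 < β < 1 and Q_A > 0. Suppose {z_n}_{n=1}^N is a sequence of non-negative reals and {y_n}_{n=1}^N is a non-negative, non-decreasing sequence of reals such that z_n ≤ (Q_A / N^β) · Σ_{i=1}^{n−1} z_i / (n − i)^{1−β} + y_n for all 1 ≤ n ≤ N. Then z_n ≤ y_n · (1 + 𝔾_β(Q_A Γ(β))) for all 1 ≤ n ≤ N, where Γ is the Gamma function and 𝔾_β(x) = Σ_{k=0}^∞ x^k / Γ(βk + 1) is the Mittag-Leffler function. -/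
/-!
With `c = Q_A / N^β`, the sequence `w_n = ∑_{k<n} (c Γ(β) n^β)^k / Γ(βk + 1)` of partial sums of
the Mittag-Leffler series is a supersolution: `w_n ≥ 1 + c ∑_{i<n} w_i / (n - i)^{1-β}`.
Indeed, comparing the discrete convolution `∑_{i<n} i^{βk} (n - i)^{β-1}` with the Beta integral
`∫_0^n t^{βk} (n - t)^{β-1} dt = Γ(βk + 1) Γ(β) / Γ(βk + 1 + β) · n^{βk+β}` turns the `k`-th term
of `w_n` into the `(k+1)`-st. Strong induction on `n` then gives `z_n ≤ y_n w_n`, and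
`w_n ≤ 𝔾_β(Q_A Γ(β))` because `n ≤ N`. The series converges by the ratio test, since
log-convexity of `Γ` gives `Γ(s) s^β ≤ 2 Γ(s + β)`.
-/

open Real Finset Filter MeasureTheory

theorem Real.Gamma_mul_rpow_le_two_mul_Gamma_add {s β : ℝ} (hβ0 : 0 < β) (hβ1 : β < 1)
    (hβs : β ≤ s) : Gamma s * s ^ β ≤ 2 * Gamma (s + β) := by
  have hs : 0 < s := hβ0.trans_le hβs
  have hsβ : 0 < s + β := by linarith
  have hΓ : 0 < Gamma (s + β) := Gamma_pos_of_pos hsβ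
  -- log-convexity of `Γ` between `s + β` and `s + β + 1`, with weights `β` and `1 - β`
  have hconv : Gamma (s + 1) ≤ Gamma (s + β) * (s + β) ^ (1 - β) := by
    have h := Gamma_mul_add_mul_le_rpow_Gamma_mul_rpow_Gamma hsβ (by linarith : 0 < s + β + 1)
      hβ0 (by linarith : 0 < 1 - β) (add_sub_cancel β 1)
    rw [show β * (s + β) + (1 - β) * (s + β + 1) = s + 1 by ring, Gamma_add_one hsβ.ne',
      mul_rpow hsβ.le hΓ.le] at h
    refine h.trans_eq ?_
    rw [mul_left_comm, ← rpow_add hΓ, add_sub_cancel, rpow_one, mul_comm]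
  have hpow : (s + β) ^ (1 - β) * s ^ β ≤ 2 * s := by
    calc (s + β) ^ (1 - β) * s ^ β ≤ (s + β) ^ (1 - β) * (s + β) ^ β := by
          gcongr; linarith
      _ = s + β := by rw [← rpow_add hsβ, sub_add_cancel, rpow_one]
      _ ≤ 2 * s := by linarith
  refine le_of_mul_le_mul_left ?_ hs
  calc s * (Gamma s * s ^ β) = Gamma (s + 1) * s ^ β := by rw [Gamma_add_one hs.ne']; ring
    _ ≤ Gamma (s + β) * (s + β) ^ (1 - β) * s ^ β := by gcongr
    _ ≤ Gamma (s + β) * (2 * s) := by rw [mul_assoc]; gcongr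
    _ = s * (2 * Gamma (s + β)) := by ring

theorem summable_pow_div_Gamma_mul_add_one {β : ℝ} (hβ0 : 0 < β) (hβ1 : β < 1) (x : ℝ) :
    Summable fun k : ℕ => x ^ k / Gamma (β * k + 1) := by
  refine summable_of_ratio_norm_eventually_le (r := 1 / 2) (by norm_num) ?_
  have hgrowth : Tendsto (fun k : ℕ => (β * k + 1) ^ β) atTop atTop :=
    (tendsto_rpow_atTop hβ0).comp <| tendsto_atTop_add_const_right _ 1 <|
      tendsto_natCast_atTop_atTop.const_mul_atTop hβ0
  filter_upwards [hgrowth.eventually_ge_atTop (4 * |x|)] with k hk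
  set s : ℝ := β * k + 1
  have hβs : β ≤ s := by have := mul_nonneg hβ0.le k.cast_nonneg; linarith
  have hs : 0 < s := by positivity
  have hΓ : 0 < Gamma s := Gamma_pos_of_pos hs
  have hratio : 2 * |x| * Gamma s ≤ Gamma (s + β) := by
    nlinarith [Real.Gamma_mul_rpow_le_two_mul_Gamma_add hβ0 hβ1 hβs]
  have hcast : β * ((k + 1 : ℕ) : ℝ) + 1 = s + β := by push_cast; ring
  rw [hcast, norm_div, norm_div, norm_pow, norm_pow, Real.norm_of_nonneg hΓ.le,
    Real.norm_of_nonneg (Gamma_pos_of_pos (by positivity)).le, Real.norm_eq_abs,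
    div_le_iff₀ (Gamma_pos_of_pos (by positivity)), pow_succ]
  calc |x| ^ k * |x| = 1 / 2 * (|x| ^ k / Gamma s) * (2 * |x| * Gamma s) := by
        field_simp
    _ ≤ 1 / 2 * (|x| ^ k / Gamma s) * Gamma (s + β) := by gcongr

theorem integral_rpow_mul_sub_rpow {p q a : ℝ} (hp : 0 < p) (hq : 0 < q) (ha : 0 < a) :
    ∫ t in 0..a, t ^ (p - 1) * (a - t) ^ (q - 1) =
      Gamma p * Gamma q / Gamma (p + q) * a ^ (p + q - 1) := by
  apply Complex.ofReal_injective
  have hbeta := Complex.betaIntegral_scaled p q ha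
  rw [Complex.betaIntegral_eq_Gamma_mul_div _ _ (by simpa) (by simpa)] at hbeta
  rw [← intervalIntegral.integral_ofReal]
  convert hbeta using 1
  · refine intervalIntegral.integral_congr fun t ht => ?_
    rw [Set.uIcc_of_le ha.le] at ht
    push_cast
    rw [Complex.ofReal_cpow ht.1, Complex.ofReal_cpow (sub_nonneg.2 ht.2)]
    push_cast
    ring
  · rw [← Complex.ofReal_add, Complex.Gamma_ofReal, Complex.Gamma_ofReal, Complex.Gamma_ofReal,
      Complex.ofReal_mul, Complex.ofReal_cpow ha.le]
    push_cast
    ring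

theorem intervalIntegrable_rpow_mul_sub_rpow {β γ : ℝ} (hβ : 0 < β) (hγ : 0 ≤ γ) (a : ℝ) :
    IntervalIntegrable (fun t => t ^ γ * (a - t) ^ (β - 1)) volume 0 a := by
  have h := (intervalIntegral.intervalIntegrable_rpow' (a := a) (b := 0)
    (show -1 < β - 1 by linarith)).comp_sub_left a
  rw [sub_self, sub_zero] at h
  exact h.continuousOn_mul (continuous_id.rpow_const fun _ => Or.inr hγ).continuousOn

theorem sum_Ico_rpow_div_rpow_le {β γ : ℝ} (hβ0 : 0 < β) (hβ1 : β ≤ 1) (hγ : 0 ≤ γ) (n : ℕ) :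
    ∑ i ∈ Ico 1 n, (i : ℝ) ^ γ / ((n - i : ℕ) : ℝ) ^ (1 - β) ≤
      Gamma (γ + 1) * Gamma β / Gamma (γ + 1 + β) * (n : ℝ) ^ (γ + β) := by
  rcases Nat.eq_zero_or_pos n with rfl | hn
  · simp only [Ico_eq_empty_of_le zero_le_one, sum_empty]
    positivity
  set f : ℝ → ℝ := fun t => t ^ γ * (n - t) ^ (β - 1)
  have hf : IntervalIntegrable f volume 0 n :=
    intervalIntegrable_rpow_mul_sub_rpow hβ0 hγ n
  have hf_sub : ∀ i : ℕ, i < n → IntervalIntegrable f volume i (i + 1) := by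
    intro i hi
    have hin : (i : ℝ) + 1 ≤ n := by exact_mod_cast hi
    exact hf.mono_set (Set.uIcc_subset_uIcc (Set.mem_uIcc_of_le i.cast_nonneg (by linarith))
      (Set.mem_uIcc_of_le (by positivity) hin))
  -- `f` is nondecreasing on `[i, n)`, so the value at `i` is below the mean over `[i, i + 1]`
  have hpoint : ∀ i : ℕ, i < n → f i ≤ ∫ t in (i : ℝ)..i + 1, f t := by
    intro i hi
    have hin : (i : ℝ) + 1 ≤ n := by exact_mod_cast hi
    calc f i = ∫ _ in (i : ℝ)..i + 1, f i := by simp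
      _ ≤ ∫ t in (i : ℝ)..i + 1, f t := by
        refine intervalIntegral.integral_mono_on_of_le_Ioo (by linarith)
          intervalIntegrable_const (hf_sub i hi) fun t ht => ?_
        have : 0 < (n : ℝ) - t := by linarith [ht.2]
        exact mul_le_mul (rpow_le_rpow i.cast_nonneg ht.1.le hγ)
          (rpow_le_rpow_of_nonpos this (by linarith [ht.1]) (by linarith))
          (rpow_nonneg (by linarith) _) (rpow_nonneg (i.cast_nonneg.trans ht.1.le) _)
  calc ∑ i ∈ Ico 1 n, (i : ℝ) ^ γ / ((n - i : ℕ) : ℝ) ^ (1 - β)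
      = ∑ i ∈ Ico 1 n, f i := by
        refine sum_congr rfl fun i hi => ?_
        have hi : i < n := (mem_Ico.1 hi).2
        rw [Nat.cast_sub hi.le, div_eq_mul_inv,
          ← rpow_neg (sub_nonneg.2 (by exact_mod_cast hi.le)), neg_sub]
    _ ≤ ∑ i ∈ Ico 1 n, ∫ t in (i : ℝ)..i + 1, f t :=
        sum_le_sum fun i hi => hpoint i (mem_Ico.1 hi).2
    _ = ∫ t in (1 : ℝ)..n, f t := by
        have := intervalIntegral.sum_integral_adjacent_intervals_Ico (a := fun i : ℕ => (i : ℝ))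
          (f := f) (μ := volume) hn fun i hi => by
            simpa using hf_sub i hi.2
        simpa using this
    _ ≤ ∫ t in (0 : ℝ)..n, f t := by
        refine intervalIntegral.integral_mono_interval zero_le_one (by exact_mod_cast hn) le_rfl
          (ae_restrict_of_forall_mem measurableSet_Ioc fun t ht =>
            mul_nonneg (rpow_nonneg ht.1.le _) (rpow_nonneg (sub_nonneg.2 ht.2) _)) hf
    _ = Gamma (γ + 1) * Gamma β / Gamma (γ + 1 + β) * (n : ℝ) ^ (γ + β) := by
        have := integral_rpow_mul_sub_rpow (by linarith : 0 < γ + 1) hβ0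
          (by exact_mod_cast hn : (0 : ℝ) < n)
        rw [add_sub_cancel_right, show γ + 1 + β - 1 = γ + β by ring] at this
        exact this

noncomputable def mittagLefflerPartialSum (β x : ℝ) (n : ℕ) : ℝ :=
  ∑ k ∈ range n, x ^ k / Gamma (β * k + 1)

theorem mittagLefflerPartialSum_le_tsum {β x u : ℝ} (hβ : 0 ≤ β) (hu : 0 ≤ u) (hux : u ≤ x)
    (hsum : Summable fun k : ℕ => x ^ k / Gamma (β * k + 1)) (n : ℕ) :
    mittagLefflerPartialSum β u n ≤ ∑' k : ℕ, x ^ k / Gamma (β * k + 1) := by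
  have hΓ : ∀ k : ℕ, 0 < Gamma (β * k + 1) := fun k => Gamma_pos_of_pos (by positivity)
  calc mittagLefflerPartialSum β u n ≤ ∑ k ∈ range n, x ^ k / Gamma (β * k + 1) :=
        sum_le_sum fun k _ => by gcongr
    _ ≤ _ := hsum.sum_le_tsum _ fun k _ => div_nonneg (pow_nonneg (hu.trans hux) k) (hΓ k).le

theorem mul_pow_div_Gamma_mul_sum_Ico_le {β c : ℝ} (hβ0 : 0 < β) (hβ1 : β ≤ 1) (hc : 0 ≤ c)
    (n k : ℕ) :
    c * ((c * Gamma β) ^ k / Gamma (β * k + 1) *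
        ∑ i ∈ Ico 1 n, (i : ℝ) ^ (β * k) / ((n - i : ℕ) : ℝ) ^ (1 - β)) ≤
      (c * Gamma β * (n : ℝ) ^ β) ^ (k + 1) / Gamma (β * (k + 1 : ℕ) + 1) := by
  calc _ ≤ c * ((c * Gamma β) ^ k / Gamma (β * k + 1) *
          (Gamma (β * k + 1) * Gamma β / Gamma (β * k + 1 + β) * (n : ℝ) ^ (β * k + β))) := by
        gcongr
        exact sum_Ico_rpow_div_rpow_le hβ0 hβ1 (by positivity) n
    _ = _ := by
        rw [mul_pow (c * Gamma β), ← rpow_mul_natCast n.cast_nonneg,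
          show β * ((k + 1 : ℕ) : ℝ) + 1 = β * k + 1 + β by push_cast; ring,
          show β * ((k + 1 : ℕ) : ℝ) = β * k + β by push_cast; ring]
        field_simp
        ring

theorem one_add_sum_le_mittagLefflerPartialSum {β c : ℝ} (hβ0 : 0 < β) (hβ1 : β ≤ 1)
    (hc : 0 ≤ c) {n : ℕ} (hn : 1 ≤ n) :
    1 + ∑ i ∈ Ico 1 n, c / ((n - i : ℕ) : ℝ) ^ (1 - β) *
        mittagLefflerPartialSum β (c * Gamma β * (i : ℝ) ^ β) i ≤
      mittagLefflerPartialSum β (c * Gamma β * (n : ℝ) ^ β) n := by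
  obtain ⟨m, rfl⟩ : ∃ m, n = m + 1 := ⟨n - 1, by omega⟩
  set x := c * Gamma β
  set b : ℕ → ℝ := fun k => x ^ k / Gamma (β * k + 1)
  have hexpand : ∀ (u : ℝ), 0 ≤ u → ∀ k : ℕ,
      (x * u ^ β) ^ k / Gamma (β * k + 1) = b k * u ^ (β * k) := by
    intro u hu k
    rw [rpow_mul_natCast hu, mul_pow]
    ring
  calc 1 + ∑ i ∈ Ico 1 (m + 1), c / ((m + 1 - i : ℕ) : ℝ) ^ (1 - β) *
        mittagLefflerPartialSum β (x * (i : ℝ) ^ β) i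
      ≤ 1 + ∑ i ∈ Ico 1 (m + 1), c / ((m + 1 - i : ℕ) : ℝ) ^ (1 - β) *
        ∑ k ∈ range m, b k * (i : ℝ) ^ (β * k) := by
        gcongr with i hi
        rw [mittagLefflerPartialSum]
        simp_rw [hexpand _ i.cast_nonneg]
        exact sum_le_sum_of_subset_of_nonneg (range_subset_range.2 (Nat.lt_succ_iff.1 (mem_Ico.1 hi).2))
          fun k _ _ => by positivity
    _ = 1 + ∑ k ∈ range m, c * (b k * ∑ i ∈ Ico 1 (m + 1),
          (i : ℝ) ^ (β * k) / ((m + 1 - i : ℕ) : ℝ) ^ (1 - β)) := by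
        simp_rw [mul_sum]
        rw [sum_comm]
        congr 1
        refine sum_congr rfl fun k _ => sum_congr rfl fun i _ => ?_
        ring
    _ ≤ 1 + ∑ k ∈ range m,
          (x * ((m + 1 : ℕ) : ℝ) ^ β) ^ (k + 1) / Gamma (β * (k + 1 : ℕ) + 1) := by
        gcongr with k
        exact mul_pow_div_Gamma_mul_sum_Ico_le hβ0 hβ1 hc (m + 1) k
    _ = mittagLefflerPartialSum β (x * ((m + 1 : ℕ) : ℝ) ^ β) (m + 1) := by
        rw [mittagLefflerPartialSum, sum_range_succ', add_comm]
        simp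

theorem le_mul_of_le_sum_add_of_supersolution {N : ℕ} {K : ℕ → ℕ → ℝ} {z y w : ℕ → ℝ}
    (hK : ∀ n i, 0 ≤ K n i) (hw : ∀ n, 0 ≤ w n)
    (hy : ∀ n, 1 ≤ n → n ≤ N → 0 ≤ y n)
    (hymono : ∀ i j, 1 ≤ i → i ≤ j → j ≤ N → y i ≤ y j)
    (hsuper : ∀ n, 1 ≤ n → n ≤ N → 1 + ∑ i ∈ Ico 1 n, K n i * w i ≤ w n)
    (hbound : ∀ n, 1 ≤ n → n ≤ N → z n ≤ ∑ i ∈ Ico 1 n, K n i * z i + y n) :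
    ∀ n, 1 ≤ n → n ≤ N → z n ≤ y n * w n := by
  intro n
  induction n using Nat.strong_induction_on with
  | _ n ih =>
    intro hn hnN
    have hsum : ∑ i ∈ Ico 1 n, K n i * z i ≤ y n * ∑ i ∈ Ico 1 n, K n i * w i := by
      rw [mul_sum]
      refine sum_le_sum fun i hi => ?_
      obtain ⟨hi1, hin⟩ := mem_Ico.1 hi
      calc K n i * z i ≤ K n i * (y i * w i) :=
            mul_le_mul_of_nonneg_left (ih i hin hi1 (by omega)) (hK n i)
        _ ≤ K n i * (y n * w i) := mul_le_mul_of_nonneg_left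
            (mul_le_mul_of_nonneg_right (hymono i n hi1 hin.le hnN) (hw i)) (hK n i)
        _ = y n * (K n i * w i) := by ring
    calc z n ≤ ∑ i ∈ Ico 1 n, K n i * z i + y n := hbound n hn hnN
      _ ≤ y n * (1 + ∑ i ∈ Ico 1 n, K n i * w i) := by linarith
      _ ≤ y n * w n := mul_le_mul_of_nonneg_left (hsuper n hn hnN) (hy n hn hnN)

theorem stmt_2_general (N : ℕ) (β QA : ℝ) (hβ0 : 0 < β) (hβ1 : β < 1)
    (hQA : 0 < QA) (z y : ℕ → ℝ)
    (hy : ∀ n, 1 ≤ n → n ≤ N → 0 ≤ y n)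
    (hymono : ∀ i j, 1 ≤ i → i ≤ j → j ≤ N → y i ≤ y j)
    (hbound : ∀ n, 1 ≤ n → n ≤ N →
      z n ≤ QA / (N : ℝ) ^ β * ∑ i ∈ Finset.Ico 1 n, z i / ((n - i : ℕ) : ℝ) ^ (1 - β)
        + y n) :
    ∀ n, 1 ≤ n → n ≤ N →
      z n ≤ y n * (1 + ∑' k : ℕ, (QA * Real.Gamma β) ^ k / Real.Gamma (β * k + 1)) := by
  intro n hn hnN
  have hyn := hy n hn hnN
  set c := QA / (N : ℝ) ^ β
  have hbound' : ∀ n, 1 ≤ n → n ≤ N →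
      z n ≤ ∑ i ∈ Ico 1 n, c / ((n - i : ℕ) : ℝ) ^ (1 - β) * z i + y n := by
    intro n hn hnN
    simpa only [mul_sum, div_mul_eq_mul_div, mul_div_assoc] using hbound n hn hnN
  have hcomparison := le_mul_of_le_sum_add_of_supersolution
    (w := fun m => mittagLefflerPartialSum β (c * Gamma β * (m : ℝ) ^ β) m)
    (fun _ _ => by positivity) (fun _ => by unfold mittagLefflerPartialSum; positivity) hy hymono
    (fun m hm _ => one_add_sum_le_mittagLefflerPartialSum hβ0 hβ1.le (by positivity) hm)
    hbound' n hn hnN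
  have hargument : c * Gamma β * (n : ℝ) ^ β ≤ QA * Gamma β := by
    rw [show c * Gamma β * (n : ℝ) ^ β = QA * Gamma β * ((n : ℝ) ^ β / (N : ℝ) ^ β) by ring]
    exact mul_le_of_le_one_right (by positivity)
      (div_le_one_of_le₀ (by gcongr) (by positivity))
  calc z n ≤ y n * mittagLefflerPartialSum β (c * Gamma β * (n : ℝ) ^ β) n := hcomparison
    _ ≤ y n * ∑' k : ℕ, (QA * Gamma β) ^ k / Gamma (β * k + 1) :=
        mul_le_mul_of_nonneg_left (mittagLefflerPartialSum_le_tsum hβ0.le (by positivity)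
          hargument (summable_pow_div_Gamma_mul_add_one hβ0 hβ1 _) n) hyn
    _ ≤ _ := mul_le_mul_of_nonneg_left (by linarith) hyn

/-- Discrete fractional Gronwall inequality: if `z_n ≤ (Q_A / N^β) Σ_{i=1}^{n-1}
z_i/(n-i)^{1-β} + y_n` for `1 ≤ n ≤ N`, with `z` nonnegative and `y` nonnegative and
nondecreasing, `0 < β < 1`, `Q_A > 0`, then `z_n ≤ y_n (1 + 𝔾_β(Q_A Γ(β)))`, where
`𝔾_β(x) = Σ_{k=0}^∞ x^k / Γ(βk+1)` is the Mittag-Leffler function. -/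
theorem stmt_2 (N : ℕ) (hN : 1 ≤ N) (β QA : ℝ) (hβ0 : 0 < β) (hβ1 : β < 1)
    (hQA : 0 < QA) (z y : ℕ → ℝ)
    (hz : ∀ n, 1 ≤ n → n ≤ N → 0 ≤ z n)
    (hy : ∀ n, 1 ≤ n → n ≤ N → 0 ≤ y n)
    (hymono : ∀ i j, 1 ≤ i → i ≤ j → j ≤ N → y i ≤ y j)
    (hbound : ∀ n, 1 ≤ n → n ≤ N →
      z n ≤ QA / (N : ℝ) ^ β * ∑ i ∈ Finset.Ico 1 n, z i / ((n - i : ℕ) : ℝ) ^ (1 - β)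
        + y n) :
    ∀ n, 1 ≤ n → n ≤ N →
      z n ≤ y n * (1 + ∑' k : ℕ, (QA * Real.Gamma β) ^ k / Real.Gamma (β * k + 1)) :=
  stmt_2_general N β QA hβ0 hβ1 hQA z y hy hymono hbound
end

section
/- Let a < b be reals, α ≥ 0, β ≥ 0 and c ≥ 0 constants, and let {y_n}_{n=1}^∞ be a sequence of integrable functions on [a, b] satisfying y_{n+1}(t) ≤ α + β ∫_a^t y_n(s) ds for all t ∈ [a, b] and all n ≥ 1, with y_1(t) ≡ c constant. Then for every n ≥ 1 and every t ∈ [a, b], y_{n+1}(t) ≤ α e^{β(t−a)} + c β^n (t − a)^n / n!. -/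
open MeasureTheory

lemma exp_int_bound (β u : ℝ) (hβ : 0 ≤ β) (hu : 0 ≤ u) :
    β * ∫ s in (0:ℝ)..u, Real.exp (β * s) ≤ Real.exp (β * u) - 1 := by
  rcases eq_or_lt_of_le hβ with h | h
  · simp [← h]
  · rw [intervalIntegral.integral_comp_mul_left (fun x => Real.exp x) (ne_of_gt h)]
    rw [integral_exp]
    rw [smul_eq_mul, ← mul_assoc, mul_inv_cancel₀ (ne_of_gt h)]
    simp

lemma pow_int (a t : ℝ) (n : ℕ) :
    ∫ s in a..t, (s - a) ^ n = (t - a) ^ (n + 1) / (n + 1) := by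
  rw [intervalIntegral.integral_comp_sub_right (fun x => x ^ n) a]
  simp [integral_pow]

/-- Iterated Gronwall-type estimate: if `y_{n+1}(t) ≤ α + β ∫_a^t y_n(s) ds` on `[a,b]`
for all `n ≥ 1`, each `y_n` integrable on `[a,b]`, and `y_1 ≡ c`, then
`y_{n+1}(t) ≤ α e^{β(t-a)} + c βⁿ (t-a)ⁿ / n!` for all `n ≥ 1` and `t ∈ [a,b]`. -/
theorem stmt_3 (a b : ℝ) (hab : a < b) (α β c : ℝ)
    (hα : 0 ≤ α) (hβ : 0 ≤ β) (hc : 0 ≤ c)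
    (y : ℕ → ℝ → ℝ)
    (hint : ∀ n, 1 ≤ n → IntegrableOn (y n) (Set.Icc a b))
    (hy1 : ∀ t ∈ Set.Icc a b, y 1 t = c)
    (hrec : ∀ n, 1 ≤ n → ∀ t ∈ Set.Icc a b,
      y (n + 1) t ≤ α + β * ∫ s in a..t, y n s) :
    ∀ n, 1 ≤ n → ∀ t ∈ Set.Icc a b,
      y (n + 1) t ≤ α * Real.exp (β * (t - a)) + c * (β ^ n * (t - a) ^ n / n.factorial) := by
  intro n hn
  induction n, hn using Nat.le_induction with
  | base =>
    intro t ht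
    obtain ⟨hat, htb⟩ := ht
    have h1 := hrec 1 le_rfl t ⟨hat, htb⟩
    have hI : ∫ s in a..t, y 1 s = c * (t - a) := by
      rw [intervalIntegral.integral_congr (g := fun _ => c)
        (fun s hs => hy1 s ⟨((Set.uIcc_of_le hat) ▸ hs).1, (((Set.uIcc_of_le hat) ▸ hs).2).trans htb⟩)]
      simp [mul_comm]
    rw [hI] at h1
    have hex : (1:ℝ) ≤ Real.exp (β * (t - a)) :=
      Real.one_le_exp (mul_nonneg hβ (by linarith))
    have : α + β * (c * (t - a)) ≤ α * Real.exp (β * (t - a)) + c * (β ^ 1 * (t - a) ^ 1 / (Nat.factorial 1)) := by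
      simp [Nat.factorial]
      nlinarith
    linarith
  | succ n hn ih =>
    intro t ht
    obtain ⟨hat, htb⟩ := ht
    set g : ℝ → ℝ := fun s => α * Real.exp (β * (s - a)) + c * (β ^ n * (s - a) ^ n / n.factorial) with hg
    have hgcont : Continuous g := by fun_prop
    have hmono : ∫ s in a..t, y (n + 1) s ≤ ∫ s in a..t, g s := by
      apply intervalIntegral.integral_mono_on hat
      · rw [intervalIntegrable_iff_integrableOn_Icc_of_le hat]
        exact (hint (n+1) (by omega)).mono_set (Set.Icc_subset_Icc le_rfl htb)
      · exact hgcont.intervalIntegrable a t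
      · intro s hs; exact ih s ⟨hs.1, hs.2.trans htb⟩
    have hgsplit : ∫ s in a..t, g s
        = α * (∫ s in a..t, Real.exp (β * (s - a))) + c * ((t - a) ^ (n+1) / (n+1) * (β ^ n / n.factorial)) := by
      rw [hg]
      rw [intervalIntegral.integral_add ((by fun_prop : Continuous fun s => α * Real.exp (β * (s - a))).intervalIntegrable a t)
          ((by fun_prop : Continuous fun s => c * (β ^ n * (s - a) ^ n / n.factorial)).intervalIntegrable a t)]
      rw [intervalIntegral.integral_const_mul, intervalIntegral.integral_const_mul]
      congr 1
      have : (fun s => β ^ n * (s - a) ^ n / (n.factorial : ℝ)) = fun s => (β ^ n / n.factorial) * (s - a) ^ n := by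
        funext s; ring
      rw [this, intervalIntegral.integral_const_mul, pow_int]
      ring
    have hexp : β * ∫ s in a..t, Real.exp (β * (s - a)) ≤ Real.exp (β * (t - a)) - 1 := by
      have := exp_int_bound β (t - a) hβ (by linarith)
      rwa [show (∫ s in a..t, Real.exp (β * (s - a))) = ∫ s in (0:ℝ)..(t-a), Real.exp (β * s) from by
        rw [intervalIntegral.integral_comp_sub_right (fun x => Real.exp (β * x)) a]; norm_num]
    have h1 := hrec (n + 1) (by omega) t ⟨hat, htb⟩
    have key : α + β * ∫ s in a..t, y (n + 1) s
        ≤ α * Real.exp (β * (t - a)) + c * (β ^ (n+1) * (t - a) ^ (n+1) / (n+1).factorial) := by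
      have h2 : β * ∫ s in a..t, y (n + 1) s ≤ β * ∫ s in a..t, g s :=
        mul_le_mul_of_nonneg_left hmono hβ
      rw [hgsplit] at h2
      have h3 : β * (α * (∫ s in a..t, Real.exp (β * (s - a)))) ≤ α * (Real.exp (β * (t - a)) - 1) := by
        have := mul_le_mul_of_nonneg_left hexp hα
        nlinarith [this]
      have hfac : ((n+1).factorial : ℝ) = (n+1) * n.factorial := by
        rw [Nat.factorial_succ]; push_cast; ring
      have h4 : β * (c * ((t - a) ^ (n+1) / (n+1) * (β ^ n / n.factorial)))
          = c * (β ^ (n+1) * (t - a) ^ (n+1) / (n+1).factorial) := by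
        rw [hfac]
        have hn1 : ((n:ℝ)+1) ≠ 0 := by positivity
        have hf : (n.factorial : ℝ) ≠ 0 := by positivity
        field_simp
        ring
      nlinarith [h2, h3, h4]
    linarith
end

section
/- Let K ⊆ ℝ^m be a nonempty, closed, convex set and let (S, 𝒮, μ) be a finite measure space. Let G ∈ L²(μ; ℝ^m) and let u ∈ L²(μ; ℝ^m) satisfy u(s) ∈ K for μ-a.e. s ∈ S. Then the following two statements are equivalent: (1) for μ-a.e. s ∈ S, ⟨G(s), v − u(s)⟩ ≥ 0 for all v ∈ K; (2) for every v' ∈ L²(μ; ℝ^m) with v'(s) ∈ K for μ-a.e. s ∈ S, ∫_S ⟨G(s), v'(s) − u(s)⟩ dμ(s) ≥ 0. -/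
open MeasureTheory
open scoped RealInnerProductSpace

/-! Integrating the pointwise inequality gives the integrated one. Conversely, fix `v ∈ K` and
test with `v'` equal to `v` on a measurable set `A` and to `u` off `A`: the integral of
`⟪G, v - u⟫` over every `A` is nonnegative, so `⟪G s, v - u s⟫ ≥ 0` for a.e. `s`.
The exceptional null set depends on `v`; taking the union over a countable dense subset of `K`
and using that `{v | 0 ≤ ⟪G s, v - u s⟫}` is closed removes this dependence. -/

section

variable {S E : Type*} [MeasurableSpace S] {μ : Measure S}
  [NormedAddCommGroup E] [InnerProductSpace ℝ E]

theorem MeasureTheory.MemLp.integrable_inner {f g : S → E} (hf : MemLp f 2 μ)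
    (hg : MemLp g 2 μ) :
    Integrable (fun s => ⟪f s, g s⟫) μ :=
  (L2.integrable_inner (𝕜 := ℝ) (hf.toLp f) (hg.toLp g)).congr <| by
    filter_upwards [hf.coeFn_toLp, hg.coeFn_toLp] with s hfs hgs
    rw [hfs, hgs]

theorem ae_inner_sub_nonneg_of_forall_integral_nonneg [IsFiniteMeasure μ] {K : Set E}
    {G u : S → E} (hG : MemLp G 2 μ) (hu : MemLp u 2 μ) (huK : ∀ᵐ s ∂μ, u s ∈ K)
    (h : ∀ v' : S → E, MemLp v' 2 μ → (∀ᵐ s ∂μ, v' s ∈ K) →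
      0 ≤ ∫ s, ⟪G s, v' s - u s⟫ ∂μ)
    {v : E} (hv : v ∈ K) : ∀ᵐ s ∂μ, 0 ≤ ⟪G s, v - u s⟫ := by
  classical
  refine ae_nonneg_of_forall_setIntegral_nonneg
    (hG.integrable_inner ((memLp_const v).sub hu)) fun A hA _ => ?_
  have hv' : MemLp (A.piecewise (fun _ => v) u) 2 μ :=
    ((memLp_const v).restrict _).piecewise hA (hu.restrict _)
  have hv'K : ∀ᵐ s ∂μ, A.piecewise (fun _ => v) u s ∈ K := by
    filter_upwards [huK] with s hs
    by_cases hsA : s ∈ A <;> simp [hsA, hs, hv]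
  have hindicator : (fun s => ⟪G s, A.piecewise (fun _ => v) u s - u s⟫) =
      A.indicator fun s => ⟪G s, v - u s⟫ := by
    funext s
    by_cases hsA : s ∈ A <;> simp [hsA]
  rw [← integral_indicator hA, ← hindicator]
  exact h _ hv' hv'K

end

theorem ae_forall_mem_of_isSeparable {S E : Type*} [MeasurableSpace S] {μ : Measure S}
    [TopologicalSpace E] [TopologicalSpace.PseudoMetrizableSpace E] {K : Set E}
    (hK : TopologicalSpace.IsSeparable K)
    {p : S → E → Prop} (hp : ∀ s, IsClosed {v | p s v})
    (h : ∀ v ∈ K, ∀ᵐ s ∂μ, p s v) :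
    ∀ᵐ s ∂μ, ∀ v ∈ K, p s v := by
  obtain ⟨D, hDK, hDc, hKD⟩ := hK.exists_countable_dense_subset
  filter_upwards [(ae_ball_iff hDc).mpr fun v hv => h v (hDK hv)] with s hs v hv
  exact (hp s).closure_subset_iff.mpr hs (hKD hv)

theorem stmt_4_general {m : ℕ} (K : Set (EuclideanSpace ℝ (Fin m)))
    {S : Type*} [MeasurableSpace S] (μ : Measure S) [IsFiniteMeasure μ]
    (G u : S → EuclideanSpace ℝ (Fin m))
    (hG : MemLp G 2 μ) (hu : MemLp u 2 μ) (huK : ∀ᵐ s ∂μ, u s ∈ K) :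
    (∀ᵐ s ∂μ, ∀ v ∈ K, 0 ≤ ⟪G s, v - u s⟫) ↔
      (∀ v' : S → EuclideanSpace ℝ (Fin m), MemLp v' 2 μ → (∀ᵐ s ∂μ, v' s ∈ K) →
        0 ≤ ∫ s, ⟪G s, v' s - u s⟫ ∂μ) := by
  refine ⟨fun hpointwise v' _ hv'K => integral_nonneg_of_ae ?_, fun hintegral => ?_⟩
  · filter_upwards [hpointwise, hv'K] with s hs hsK using hs _ hsK
  · refine ae_forall_mem_of_isSeparable (.of_separableSpace K)
      (fun s => isClosed_le continuous_const (by fun_prop)) fun v hv => ?_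
    exact ae_inner_sub_nonneg_of_forall_integral_nonneg hG hu huK hintegral hv

/-- Equivalence of the pointwise (a.e.) variational inequality and its integrated form:
for `G, u ∈ L²(μ; ℝ^m)` with `u(s) ∈ K` a.e. (`K` nonempty closed convex, `μ` finite),
`⟨G(s), v − u(s)⟩ ≥ 0` for all `v ∈ K`, a.e. `s`, iff
`∫ ⟨G(s), v'(s) − u(s)⟩ dμ ≥ 0` for every `v' ∈ L²` with `v'(s) ∈ K` a.e. -/
theorem stmt_4 {m : ℕ} (K : Set (EuclideanSpace ℝ (Fin m)))
    (hKne : K.Nonempty) (hKcl : IsClosed K) (hKcv : Convex ℝ K)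
    {S : Type*} [MeasurableSpace S] (μ : Measure S) [IsFiniteMeasure μ]
    (G u : S → EuclideanSpace ℝ (Fin m))
    (hG : MemLp G 2 μ) (hu : MemLp u 2 μ) (huK : ∀ᵐ s ∂μ, u s ∈ K) :
    (∀ᵐ s ∂μ, ∀ v ∈ K, 0 ≤ ⟪G s, v - u s⟫) ↔
      (∀ v' : S → EuclideanSpace ℝ (Fin m), MemLp v' 2 μ → (∀ᵐ s ∂μ, v' s ∈ K) →
        0 ≤ ∫ s, ⟪G s, v' s - u s⟫ ∂μ) :=
  stmt_4_general K μ G u hG hu huK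
end

section
/- Let H be a real Hilbert space, K ⊆ H nonempty, closed and convex, and F : H → H Lipschitz with constant L > 0 and strongly monotone with constant C > 0. Then there exists a unique u ∈ K such that ⟨F(u), v − u⟩ ≥ 0 for all v ∈ K. -/
/-!
For `ρ > 0` the solutions of VI(K, F) are exactly the fixed points of `u ↦ P_K (u - ρ F u)`,
where `P_K` is the (nonexpansive) metric projection onto `K`. Expanding the square,
`‖(u - v) - ρ (F u - F v)‖² ≤ (1 - 2ρC + ρ²L²) ‖u - v‖²`, and the choice `ρ = C / L²` makes
this factor `1 - C² / L² < 1`, so Banach's fixed point theorem gives a solution. Uniqueness: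
adding the inequalities of two solutions `u, w` gives `C ‖u - w‖² ≤ ⟪F u - F w, u - w⟫ ≤ 0`.
-/

open scoped RealInnerProductSpace NNReal

theorem LipschitzWith.of_norm_sub_sq_le {E E' : Type*} [SeminormedAddCommGroup E]
    [SeminormedAddCommGroup E'] {f : E → E'} {q : ℝ}
    (hf : ∀ u v, ‖f u - f v‖ ^ 2 ≤ q * ‖u - v‖ ^ 2) :
    LipschitzWith (NNReal.sqrt q.toNNReal) f := by
  refine LipschitzWith.of_dist_le_mul fun u v => ?_
  rw [dist_eq_norm, dist_eq_norm, Real.coe_sqrt, Real.coe_toNNReal']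
  have hq : 0 ≤ max q 0 := le_max_right q 0
  rw [← pow_le_pow_iff_left₀ (norm_nonneg _) (by positivity) two_ne_zero, mul_pow,
    Real.sq_sqrt hq]
  exact (hf u v).trans (mul_le_mul_of_nonneg_right (le_max_left q 0) (sq_nonneg _))

section

variable {H : Type*} [NormedAddCommGroup H] [InnerProductSpace ℝ H]

def IsVISolution (K : Set H) (F : H → H) (u : H) : Prop :=
  u ∈ K ∧ ∀ v ∈ K, 0 ≤ ⟪F u, v - u⟫

theorem exists_forall_inner_le_zero_of_complete_convex {K : Set H} (hKne : K.Nonempty)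
    (hKc : IsComplete K) (hKcv : Convex ℝ K) (x : H) :
    ∃ p ∈ K, ∀ w ∈ K, ⟪x - p, w - p⟫ ≤ 0 := by
  obtain ⟨p, hpK, hp⟩ := exists_norm_eq_iInf_of_complete_convex hKne hKc hKcv x
  exact ⟨p, hpK, (norm_eq_iInf_iff_real_inner_le_zero hKcv hpK).1 hp⟩

theorem lipschitzWith_one_of_forall_inner_le_zero {K : Set H} {P : H → H}
    (hPK : ∀ x, P x ∈ K) (hP : ∀ x, ∀ w ∈ K, ⟪x - P x, w - P x⟫ ≤ 0) :
    LipschitzWith 1 P := by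
  refine LipschitzWith.mk_one fun x y => ?_
  rw [dist_eq_norm, dist_eq_norm]
  have hsq : ‖P x - P y‖ ^ 2 ≤ ⟪x - y, P x - P y⟫ := by
    have hx := hP x (P y) (hPK y)
    have hy := hP y (P x) (hPK x)
    rw [← neg_sub (P x) (P y), inner_neg_right] at hx
    rw [← real_inner_self_eq_norm_sq]
    simp only [inner_sub_left] at hx hy ⊢
    linarith
  have hcs := real_inner_le_norm (x - y) (P x - P y)
  nlinarith [norm_nonneg (P x - P y), norm_nonneg (x - y)]

variable {F : H → H} {L C : ℝ}

theorem norm_sub_smul_sub_sq_le (hLip : ∀ u₁ u₂ : H, ‖F u₁ - F u₂‖ ≤ L * ‖u₁ - u₂‖)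
    (hmono : ∀ u₁ u₂ : H, C * ‖u₁ - u₂‖ ^ 2 ≤ ⟪F u₁ - F u₂, u₁ - u₂⟫)
    {ρ : ℝ} (hρ : 0 ≤ ρ) (u v : H) :
    ‖(u - ρ • F u) - (v - ρ • F v)‖ ^ 2 ≤ (1 - 2 * ρ * C + ρ ^ 2 * L ^ 2) * ‖u - v‖ ^ 2 := by
  have hFsq : ‖F u - F v‖ ^ 2 ≤ L ^ 2 * ‖u - v‖ ^ 2 := by
    rw [← mul_pow]
    exact pow_le_pow_left₀ (norm_nonneg _) (hLip u v) 2
  have hexpand : ‖(u - ρ • F u) - (v - ρ • F v)‖ ^ 2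
      = ‖u - v‖ ^ 2 - 2 * ρ * ⟪F u - F v, u - v⟫ + ρ ^ 2 * ‖F u - F v‖ ^ 2 := by
    rw [show (u - ρ • F u) - (v - ρ • F v) = (u - v) - ρ • (F u - F v) by
      rw [smul_sub]; abel, norm_sub_sq_real, real_inner_smul_right, norm_smul,
      Real.norm_of_nonneg hρ, real_inner_comm]
    ring
  nlinarith [hmono u v, mul_le_mul_of_nonneg_left hFsq (sq_nonneg ρ)]

theorem IsVISolution.of_isFixedPt {K : Set H} {P : H → H} (hPK : ∀ x, P x ∈ K)
    (hP : ∀ x, ∀ w ∈ K, ⟪x - P x, w - P x⟫ ≤ 0) {ρ : ℝ} (hρ : 0 < ρ) {u : H}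
    (hu : Function.IsFixedPt (fun u => P (u - ρ • F u)) u) :
    IsVISolution K F u := by
  have hu' : P (u - ρ • F u) = u := hu
  refine ⟨hu' ▸ hPK _, fun v hv => ?_⟩
  have h := hP (u - ρ • F u) v hv
  rw [hu', sub_sub_cancel_left, inner_neg_left, real_inner_smul_left] at h
  exact nonneg_of_mul_nonneg_right (by linarith) hρ

theorem IsVISolution.eq {K : Set H} (hC : 0 < C)
    (hmono : ∀ u₁ u₂ : H, C * ‖u₁ - u₂‖ ^ 2 ≤ ⟪F u₁ - F u₂, u₁ - u₂⟫) {u w : H}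
    (hu : IsVISolution K F u) (hw : IsVISolution K F w) : u = w := by
  have hsum : ⟪F u - F w, u - w⟫ ≤ 0 := by
    have h₁ := hu.2 w hw.1
    have h₂ := hw.2 u hu.1
    rw [← neg_sub u w, inner_neg_right] at h₁
    rw [inner_sub_left]
    linarith
  have hsq : ‖u - w‖ ^ 2 ≤ 0 := by nlinarith [hmono u w]
  rw [← sub_eq_zero, ← norm_eq_zero]
  exact pow_eq_zero_iff two_ne_zero |>.1 (le_antisymm hsq (sq_nonneg _))

end

/-- Existence and uniqueness for the variational inequality VI(K, F): if `K ⊆ H` is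
nonempty, closed and convex in a real Hilbert space and `F : H → H` is `L`-Lipschitz and
`C`-strongly monotone, then there is a unique `u ∈ K` with `⟨F u, v − u⟩ ≥ 0` for all
`v ∈ K`. -/
theorem stmt_7 {H : Type*} [NormedAddCommGroup H] [InnerProductSpace ℝ H]
    [CompleteSpace H] (K : Set H) (hKne : K.Nonempty) (hKcl : IsClosed K)
    (hKcv : Convex ℝ K) (F : H → H) (L C : ℝ) (hL : 0 < L) (hC : 0 < C)
    (hLip : ∀ u₁ u₂ : H, ‖F u₁ - F u₂‖ ≤ L * ‖u₁ - u₂‖)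
    (hmono : ∀ u₁ u₂ : H, C * ‖u₁ - u₂‖ ^ 2 ≤ ⟪F u₁ - F u₂, u₁ - u₂⟫) :
    ∃! u : H, u ∈ K ∧ ∀ v ∈ K, 0 ≤ ⟪F u, v - u⟫ := by
  choose P hPK hP using
    exists_forall_inner_le_zero_of_complete_convex hKne hKcl.isComplete hKcv
  set ρ := C / L ^ 2 with hρ_def
  have hρ : 0 < ρ := by positivity
  have hfactor : 1 - 2 * ρ * C + ρ ^ 2 * L ^ 2 = 1 - C ^ 2 / L ^ 2 := by
    rw [hρ_def]; field_simp; ring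
  have hstep := LipschitzWith.of_norm_sub_sq_le (f := fun u => u - ρ • F u) fun u v =>
    hfactor ▸ norm_sub_smul_sub_sq_le hLip hmono hρ.le u v
  have hcontr : ContractingWith (NNReal.sqrt (1 - C ^ 2 / L ^ 2).toNNReal)
      (P ∘ fun u => u - ρ • F u) := by
    refine ⟨?_, by
      simpa only [one_mul] using (lipschitzWith_one_of_forall_inner_le_zero hPK hP).comp hstep⟩
    rw [← NNReal.sqrt_one, NNReal.sqrt_lt_sqrt, Real.toNNReal_lt_one]
    linarith [show 0 < C ^ 2 / L ^ 2 by positivity]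
  exact existsUnique_of_exists_of_unique
    ⟨_, IsVISolution.of_isFixedPt hPK hP hρ hcontr.fixedPoint_isFixedPt⟩
    fun _ _ => IsVISolution.eq hC hmono
end

section
/- Let H₁, H₂ be real Hilbert spaces, K ⊆ H₂ nonempty, closed and convex, and F : H₁ × H₂ → H₂ a mapping with constants 0 < C ≤ L such that ‖F(x₁, u₁) − F(x₂, u₂)‖ ≤ L (‖x₁ − x₂‖ + ‖u₁ − u₂‖) for all x₁, x₂ ∈ H₁, u₁, u₂ ∈ H₂, and ⟨F(x, u₁) − F(x, u₂), u₁ − u₂⟩ ≥ C ‖u₁ − u₂‖² for all x ∈ H₁, u₁, u₂ ∈ H₂. For each x ∈ H₁ let u(x) ∈ K denote the unique solution of ⟨F(x, u(x)), v − u(x)⟩ ≥ 0 for all v ∈ K. Then for every ρ with 0 < ρ < 2C/L² and all x₁, x₂ ∈ H₁, ‖u(x₁) − u(x₂)‖ ≤ [ρL / (1 − √(1 − 2ρC + ρ²L²))] · ‖x₁ − x₂‖. -/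
open scoped RealInnerProductSpace

/-- Lipschitz dependence of the solution of a parametric variational inequality on the
parameter: with `F : H₁ × H₂ → H₂` jointly `L`-Lipschitz and `C`-strongly monotone in the
second variable (`0 < C ≤ L`), and `u(x) ∈ K` the unique solution of
`⟨F(x, u(x)), v − u(x)⟩ ≥ 0` for all `v ∈ K`, we have for every `0 < ρ < 2C/L²`:
`‖u(x₁) − u(x₂)‖ ≤ [ρL / (1 − √(1 − 2ρC + ρ²L²))] ‖x₁ − x₂‖`. -/
theorem stmt_9 {H₁ H₂ : Type*}
    [NormedAddCommGroup H₁] [InnerProductSpace ℝ H₁] [CompleteSpace H₁]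
    [NormedAddCommGroup H₂] [InnerProductSpace ℝ H₂] [CompleteSpace H₂]
    (K : Set H₂) (hKne : K.Nonempty) (hKcl : IsClosed K) (hKcv : Convex ℝ K)
    (F : H₁ → H₂ → H₂) (L C : ℝ) (hC : 0 < C) (hCL : C ≤ L)
    (hLip : ∀ (x₁ x₂ : H₁) (u₁ u₂ : H₂),
      ‖F x₁ u₁ - F x₂ u₂‖ ≤ L * (‖x₁ - x₂‖ + ‖u₁ - u₂‖))
    (hmono : ∀ (x : H₁) (u₁ u₂ : H₂),
      C * ‖u₁ - u₂‖ ^ 2 ≤ ⟪F x u₁ - F x u₂, u₁ - u₂⟫)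
    (u : H₁ → H₂)
    (hu : ∀ x : H₁, u x ∈ K ∧ ∀ v ∈ K, 0 ≤ ⟪F x (u x), v - u x⟫)
    (ρ : ℝ) (hρ0 : 0 < ρ) (hρ : ρ < 2 * C / L ^ 2) (x₁ x₂ : H₁) :
    ‖u x₁ - u x₂‖
      ≤ ρ * L / (1 - Real.sqrt (1 - 2 * ρ * C + ρ ^ 2 * L ^ 2)) * ‖x₁ - x₂‖ := by
  have hL : 0 < L := lt_of_lt_of_le hC hCL
  set d := ‖u x₁ - u x₂‖ with hd
  have hd0 : 0 ≤ d := norm_nonneg _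
  -- Step 1: d ≤ (L/C) ‖x₁ - x₂‖
  have h1 := (hu x₁).2 (u x₂) (hu x₂).1
  have h2 := (hu x₂).2 (u x₁) (hu x₁).1
  -- ⟪F x₁ (u x₁) - F x₂ (u x₂), u x₁ - u x₂⟫ ≤ 0
  have hcross : ⟪F x₁ (u x₁) - F x₂ (u x₂), u x₁ - u x₂⟫ ≤ 0 := by
    have : ⟪F x₁ (u x₁) - F x₂ (u x₂), u x₁ - u x₂⟫
        = -(⟪F x₁ (u x₁), u x₂ - u x₁⟫ + ⟪F x₂ (u x₂), u x₁ - u x₂⟫) := by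
      simp [inner_sub_left, inner_sub_right]; ring
    rw [this]
    linarith
  have hkey : C * d ^ 2 ≤ L * ‖x₁ - x₂‖ * d := by
    have hm := hmono x₁ (u x₁) (u x₂)
    have hsplit : ⟪F x₁ (u x₁) - F x₁ (u x₂), u x₁ - u x₂⟫
        = ⟪F x₁ (u x₁) - F x₂ (u x₂), u x₁ - u x₂⟫
          + ⟪F x₂ (u x₂) - F x₁ (u x₂), u x₁ - u x₂⟫ := by
      simp [inner_sub_left]
    have hcs : ⟪F x₂ (u x₂) - F x₁ (u x₂), u x₁ - u x₂⟫
        ≤ ‖F x₂ (u x₂) - F x₁ (u x₂)‖ * d := real_inner_le_norm _ _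
    have hlip2 : ‖F x₂ (u x₂) - F x₁ (u x₂)‖ ≤ L * ‖x₁ - x₂‖ := by
      have h := hLip x₂ x₁ (u x₂) (u x₂)
      simp only [sub_self, norm_zero, add_zero, norm_sub_rev x₂ x₁] at h
      exact h
    have : ‖F x₂ (u x₂) - F x₁ (u x₂)‖ * d ≤ L * ‖x₁ - x₂‖ * d :=
      mul_le_mul_of_nonneg_right hlip2 hd0
    nlinarith [hm, hsplit, hcs, hcross]
  have hdLC : d ≤ L / C * ‖x₁ - x₂‖ := by
    rcases eq_or_lt_of_le hd0 with h0 | h0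
    · rw [← h0]; positivity
    · have : C * d ≤ L * ‖x₁ - x₂‖ := by nlinarith
      rw [div_mul_eq_mul_div, le_div_iff₀ hC]
      nlinarith
  -- Step 2: L/C ≤ ρL/(1-θ)
  set θ := Real.sqrt (1 - 2 * ρ * C + ρ ^ 2 * L ^ 2) with hθ
  have hL2C2 : (0:ℝ) ≤ L ^ 2 - C ^ 2 := by nlinarith
  have hρ2 : (0:ℝ) ≤ ρ ^ 2 * (L ^ 2 - C ^ 2) := mul_nonneg (sq_nonneg ρ) hL2C2
  have hexpr0 : (0:ℝ) ≤ 1 - 2 * ρ * C + ρ ^ 2 * L ^ 2 := by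
    nlinarith [sq_nonneg (1 - ρ * C)]
  have hθ0 : 0 ≤ θ := Real.sqrt_nonneg _
  have hρL2 : ρ * L ^ 2 < 2 * C :=
    (lt_div_iff₀ (by positivity : (0:ℝ) < L ^ 2)).mp hρ
  have hθlt1 : θ < 1 := by
    have h := Real.sqrt_lt_sqrt hexpr0
      (show 1 - 2 * ρ * C + ρ ^ 2 * L ^ 2 < 1 by nlinarith)
    simpa using h
  have h1θ : 0 < 1 - θ := by linarith
  have hθge : 1 - ρ * C ≤ θ := by
    rcases le_or_gt (1 - ρ * C) 0 with h | h
    · linarith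
    · rw [hθ]
      apply Real.le_sqrt' h |>.mpr
      nlinarith [hρ2]
  have h1θle : 1 - θ ≤ ρ * C := by linarith
  have hfrac : L / C ≤ ρ * L / (1 - θ) := by
    rw [div_le_div_iff₀ hC h1θ]
    have : L * (1 - θ) ≤ L * (ρ * C) := mul_le_mul_of_nonneg_left h1θle (le_of_lt hL)
    nlinarith
  calc d ≤ L / C * ‖x₁ - x₂‖ := hdLC
    _ ≤ ρ * L / (1 - θ) * ‖x₁ - x₂‖ :=
        mul_le_mul_of_nonneg_right hfrac (norm_nonneg _)
end

section
/- Let K ⊆ ℝ^m be nonempty, closed and convex, (Ω, ℱ, ℙ) a probability space, T > 0, and let μ denote the product of Lebesgue measure on [0, T] with ℙ. Let F : [0, T] × Ω × ℝ^n × ℝ^m → ℝ^m be measurable, with constants 0 < C ≤ L_F such that for a.e. (s, ω): ‖F(s, ω, x₁, u₁) − F(s, ω, x₂, u₂)‖ ≤ L_F (‖x₁ − x₂‖ + ‖u₁ − u₂‖) and ⟨F(s, ω, x, u₁) − F(s, ω, x, u₂), u₁ − u₂⟩ ≥ C ‖u₁ − u₂‖² for all x, x₁, x₂ ∈ ℝ^n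 and u, u₁, u₂ ∈ ℝ^m, and with F(·, ·, 0, u₀) ∈ L²(μ; ℝ^m) for some u₀ ∈ ℝ^m. For j = 1, 2, let x_j ∈ L²(μ; ℝ^n) and let u_j ∈ L²(μ; ℝ^m) with u_j(s, ω) ∈ K a.e. be the (unique) solution of ⟨F(s, ω, x_j(s, ω), u_j(s, ω)), v − u_j(s, ω)⟩ ≥ 0 for all v ∈ K, for a.e. (s, ω) ∈ [0, T] × Ω. Then for every ρ with 0 < ρ < 2C/L_F² and every t ∈ [0, T], E ∫_0^t ‖u₁(s, ω) − u₂(s, ω)‖² ds ≤ M' · E ∫_0^t ‖x₁(s, ω) − x₂(s, ω)‖² ds, where M' = ρ²L_F² / (1 − √(1 − 2ρC + ρ²L_F²))². -/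
/-!
The bound follows pointwise from strong monotonicity alone. Testing the variational
inequality of `u₁` with `u₂` and that of `u₂` with `u₁` and adding gives
`⟪F(x₁, u₁) - F(x₂, u₂), u₁ - u₂⟫ ≤ 0`, hence
`C ‖u₁ - u₂‖² ≤ ⟪F(x₂, u₂) - F(x₁, u₂), u₁ - u₂⟫ ≤ L_F ‖x₁ - x₂‖ ‖u₁ - u₂‖`,
i.e. `‖u₁ - u₂‖ ≤ (L_F / C) ‖x₁ - x₂‖` almost everywhere. Integrating over `[0, t] × Ω`
gives the estimate with the constant `(L_F / C)²`. The constant `M'` is the one produced by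
the contraction `u ↦ P_K (u - ρ F(x, u))` of rate `√(1 - 2ρC + ρ²L_F²)`; it is at least
`(L_F / C)²` because `1 - √(1 - 2ρC + ρ²L_F²) ≤ ρC` when `C ≤ L_F`.
-/

open MeasureTheory
open scoped RealInnerProductSpace

section VariationalInequality

variable {E X : Type*} [NormedAddCommGroup E] [InnerProductSpace ℝ E] [SeminormedAddCommGroup X]

theorem inner_sub_sub_nonpos_of_variationalInequality {K : Set E} {f g a b : E}
    (ha : a ∈ K) (hb : b ∈ K) (hf : ∀ v ∈ K, 0 ≤ ⟪f, v - a⟫)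
    (hg : ∀ v ∈ K, 0 ≤ ⟪g, v - b⟫) :
    ⟪f - g, a - b⟫ ≤ 0 := by
  have hfb := hf b hb
  have hga := hg a ha
  rw [← neg_sub a b, inner_neg_right] at hfb
  rw [inner_sub_left]
  linarith

theorem mul_norm_sub_le_of_variationalInequality {K : Set E} {G : X → E → E} {C L : ℝ}
    (hL : 0 ≤ L)
    (hLip : ∀ x₁ x₂ u, ‖G x₁ u - G x₂ u‖ ≤ L * ‖x₁ - x₂‖)
    (hmono : ∀ x u₁ u₂, C * ‖u₁ - u₂‖ ^ 2 ≤ ⟪G x u₁ - G x u₂, u₁ - u₂⟫)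
    {x₁ x₂ : X} {u₁ u₂ : E} (hu₁ : u₁ ∈ K) (hu₂ : u₂ ∈ K)
    (hvi₁ : ∀ v ∈ K, 0 ≤ ⟪G x₁ u₁, v - u₁⟫) (hvi₂ : ∀ v ∈ K, 0 ≤ ⟪G x₂ u₂, v - u₂⟫) :
    C * ‖u₁ - u₂‖ ≤ L * ‖x₁ - x₂‖ := by
  have hsolutions : ⟪G x₁ u₁ - G x₂ u₂, u₁ - u₂⟫ ≤ 0 :=
    inner_sub_sub_nonpos_of_variationalInequality hu₁ hu₂ hvi₁ hvi₂
  have hsplit : G x₁ u₁ - G x₁ u₂ = (G x₁ u₁ - G x₂ u₂) + (G x₂ u₂ - G x₁ u₂) := by abel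
  have hsq : C * ‖u₁ - u₂‖ ^ 2 ≤ L * ‖x₁ - x₂‖ * ‖u₁ - u₂‖ :=
    calc C * ‖u₁ - u₂‖ ^ 2 ≤ ⟪G x₁ u₁ - G x₁ u₂, u₁ - u₂⟫ := hmono x₁ u₁ u₂
      _ ≤ ⟪G x₂ u₂ - G x₁ u₂, u₁ - u₂⟫ := by
        rw [hsplit, inner_add_left]; linarith
      _ ≤ ‖G x₂ u₂ - G x₁ u₂‖ * ‖u₁ - u₂‖ := real_inner_le_norm _ _
      _ ≤ L * ‖x₁ - x₂‖ * ‖u₁ - u₂‖ := by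
        gcongr
        rw [norm_sub_rev x₁ x₂]
        exact hLip x₂ x₁ u₂
  rcases (norm_nonneg (u₁ - u₂)).eq_or_lt with hzero | hpos
  · rw [← hzero, mul_zero]
    positivity
  · nlinarith

end VariationalInequality

theorem sq_div_le_sq_mul_sq_div_one_sub_sqrt_sq {C L ρ : ℝ} (hC : 0 < C) (hCL : C ≤ L)
    (hρ0 : 0 < ρ) (hρ : ρ < 2 * C / L ^ 2) :
    (L / C) ^ 2 ≤ ρ ^ 2 * L ^ 2 / (1 - √(1 - 2 * ρ * C + ρ ^ 2 * L ^ 2)) ^ 2 := by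
  set q := 1 - 2 * ρ * C + ρ ^ 2 * L ^ 2
  have hL : 0 < L := hC.trans_le hCL
  have hq_ge : (1 - ρ * C) ^ 2 ≤ q := by
    have : ρ ^ 2 * C ^ 2 ≤ ρ ^ 2 * L ^ 2 := by gcongr
    linarith
  have hq_lt : q < 1 := by
    have : ρ * L ^ 2 < 2 * C := by rwa [lt_div_iff₀ (by positivity)] at hρ
    nlinarith
  have hsqrt_ge : 1 - ρ * C ≤ √q := Real.le_sqrt_of_sq_le hq_ge
  have hsqrt_lt : √q < 1 := (Real.sqrt_lt' one_pos).mpr (by rwa [one_pow])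
  have hden : (1 - √q) ^ 2 ≤ (ρ * C) ^ 2 := by
    gcongr
    linarith
  calc (L / C) ^ 2 = ρ ^ 2 * L ^ 2 / (ρ * C) ^ 2 := by field_simp
    _ ≤ ρ ^ 2 * L ^ 2 / (1 - √q) ^ 2 := by
      gcongr

theorem stmt_10_general {n m : ℕ} {Ω : Type*} [MeasurableSpace Ω]
    (K : Set (EuclideanSpace ℝ (Fin m)))
    (μ : Measure (ℝ × Ω))
    (F : ℝ × Ω → EuclideanSpace ℝ (Fin n) → EuclideanSpace ℝ (Fin m) →
      EuclideanSpace ℝ (Fin m))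
    (C L_F : ℝ) (hC : 0 < C) (hCL : C ≤ L_F)
    (hLip : ∀ᵐ p ∂μ, ∀ (x₁ x₂ : EuclideanSpace ℝ (Fin n))
      (u₁ u₂ : EuclideanSpace ℝ (Fin m)),
      ‖F p x₁ u₁ - F p x₂ u₂‖ ≤ L_F * (‖x₁ - x₂‖ + ‖u₁ - u₂‖))
    (hmono : ∀ᵐ p ∂μ, ∀ (x : EuclideanSpace ℝ (Fin n))
      (u₁ u₂ : EuclideanSpace ℝ (Fin m)),
      C * ‖u₁ - u₂‖ ^ 2 ≤ ⟪F p x u₁ - F p x u₂, u₁ - u₂⟫)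
    (x₁ x₂ : ℝ × Ω → EuclideanSpace ℝ (Fin n))
    (hx₁ : MemLp x₁ 2 μ) (hx₂ : MemLp x₂ 2 μ)
    (u₁ u₂ : ℝ × Ω → EuclideanSpace ℝ (Fin m))
    (hu₁K : ∀ᵐ p ∂μ, u₁ p ∈ K) (hu₂K : ∀ᵐ p ∂μ, u₂ p ∈ K)
    (hvi₁ : ∀ᵐ p ∂μ, ∀ v ∈ K, 0 ≤ ⟪F p (x₁ p) (u₁ p), v - u₁ p⟫)
    (hvi₂ : ∀ᵐ p ∂μ, ∀ v ∈ K, 0 ≤ ⟪F p (x₂ p) (u₂ p), v - u₂ p⟫)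
    (ρ : ℝ) (hρ0 : 0 < ρ) (hρ : ρ < 2 * C / L_F ^ 2)
    (t : ℝ) :
    ∫ p in Set.Icc 0 t ×ˢ (Set.univ : Set Ω), ‖u₁ p - u₂ p‖ ^ 2 ∂μ
      ≤ ρ ^ 2 * L_F ^ 2 / (1 - Real.sqrt (1 - 2 * ρ * C + ρ ^ 2 * L_F ^ 2)) ^ 2
        * ∫ p in Set.Icc 0 t ×ˢ (Set.univ : Set Ω), ‖x₁ p - x₂ p‖ ^ 2 ∂μ := by
  set s := Set.Icc 0 t ×ˢ (Set.univ : Set Ω)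
  have hL : 0 ≤ L_F := hC.le.trans hCL
  have hpointwise : ∀ᵐ p ∂μ, ‖u₁ p - u₂ p‖ ^ 2 ≤ (L_F / C) ^ 2 * ‖x₁ p - x₂ p‖ ^ 2 := by
    filter_upwards [hLip, hmono, hu₁K, hu₂K, hvi₁, hvi₂] with p hLp hmonop h₁K h₂K hvi₁p hvi₂p
    have hLipx : ∀ y₁ y₂ u, ‖F p y₁ u - F p y₂ u‖ ≤ L_F * ‖y₁ - y₂‖ := fun y₁ y₂ u => by
      simpa using hLp y₁ y₂ u u
    have hstab : C * ‖u₁ p - u₂ p‖ ≤ L_F * ‖x₁ p - x₂ p‖ :=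
      mul_norm_sub_le_of_variationalInequality hL hLipx hmonop h₁K h₂K hvi₁p hvi₂p
    calc ‖u₁ p - u₂ p‖ ^ 2 = (C * ‖u₁ p - u₂ p‖) ^ 2 / C ^ 2 := by field_simp
      _ ≤ (L_F * ‖x₁ p - x₂ p‖) ^ 2 / C ^ 2 := by gcongr
      _ = (L_F / C) ^ 2 * ‖x₁ p - x₂ p‖ ^ 2 := by ring
  have hx_sq : IntegrableOn (fun p => ‖x₁ p - x₂ p‖ ^ 2) s μ :=
    ((hx₁.sub hx₂).integrable_norm_pow two_ne_zero).integrableOn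
  calc ∫ p in s, ‖u₁ p - u₂ p‖ ^ 2 ∂μ
      ≤ ∫ p in s, (L_F / C) ^ 2 * ‖x₁ p - x₂ p‖ ^ 2 ∂μ :=
        integral_mono_of_nonneg (.of_forall fun _ => by positivity) (hx_sq.const_mul _)
          (ae_restrict_of_ae hpointwise)
    _ = (L_F / C) ^ 2 * ∫ p in s, ‖x₁ p - x₂ p‖ ^ 2 ∂μ := integral_const_mul _ _
    _ ≤ _ := by
      gcongr
      exact sq_div_le_sq_mul_sq_div_one_sub_sqrt_sq hC hCL hρ0 hρ

/-- Stability of solutions of the pointwise stochastic variational inequality with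
respect to the state process: with `μ = Leb|_{[0,T]} ⊗ ℙ`, `F(s, ω, ·, ·)` jointly
`L_F`-Lipschitz and `C`-strongly monotone in `u` (a.e., with `0 < C ≤ L_F`) and square
integrable at `(0, u₀)`, if `u_j ∈ L²(μ; ℝ^m)` is `K`-valued a.e. and solves the SVI
associated with `x_j ∈ L²(μ; ℝ^n)` (`j = 1, 2`), then for every `0 < ρ < 2C/L_F²` and
`t ∈ [0, T]`:
`E ∫_0^t ‖u₁ − u₂‖² ds ≤ M' · E ∫_0^t ‖x₁ − x₂‖² ds`,
with `M' = ρ²L_F² / (1 − √(1 − 2ρC + ρ²L_F²))²`. -/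
theorem stmt_10 {n m : ℕ} {Ω : Type*} [MeasurableSpace Ω] (ℙ : Measure Ω)
    [IsProbabilityMeasure ℙ]
    (K : Set (EuclideanSpace ℝ (Fin m)))
    (hKne : K.Nonempty) (hKcl : IsClosed K) (hKcv : Convex ℝ K)
    (T : ℝ) (hT : 0 < T)
    (μ : Measure (ℝ × Ω)) (hμ : μ = (volume.restrict (Set.Icc 0 T)).prod ℙ)
    (F : ℝ × Ω → EuclideanSpace ℝ (Fin n) → EuclideanSpace ℝ (Fin m) →
      EuclideanSpace ℝ (Fin m))
    (hFmeas : Measurable fun q : (ℝ × Ω) × EuclideanSpace ℝ (Fin n) ×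
      EuclideanSpace ℝ (Fin m) => F q.1 q.2.1 q.2.2)
    (C L_F : ℝ) (hC : 0 < C) (hCL : C ≤ L_F)
    (hLip : ∀ᵐ p ∂μ, ∀ (x₁ x₂ : EuclideanSpace ℝ (Fin n))
      (u₁ u₂ : EuclideanSpace ℝ (Fin m)),
      ‖F p x₁ u₁ - F p x₂ u₂‖ ≤ L_F * (‖x₁ - x₂‖ + ‖u₁ - u₂‖))
    (hmono : ∀ᵐ p ∂μ, ∀ (x : EuclideanSpace ℝ (Fin n))
      (u₁ u₂ : EuclideanSpace ℝ (Fin m)),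
      C * ‖u₁ - u₂‖ ^ 2 ≤ ⟪F p x u₁ - F p x u₂, u₁ - u₂⟫)
    (u₀ : EuclideanSpace ℝ (Fin m)) (hFu₀ : MemLp (fun p => F p 0 u₀) 2 μ)
    (x₁ x₂ : ℝ × Ω → EuclideanSpace ℝ (Fin n))
    (hx₁ : MemLp x₁ 2 μ) (hx₂ : MemLp x₂ 2 μ)
    (u₁ u₂ : ℝ × Ω → EuclideanSpace ℝ (Fin m))
    (hu₁ : MemLp u₁ 2 μ) (hu₂ : MemLp u₂ 2 μ)
    (hu₁K : ∀ᵐ p ∂μ, u₁ p ∈ K) (hu₂K : ∀ᵐ p ∂μ, u₂ p ∈ K)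
    (hvi₁ : ∀ᵐ p ∂μ, ∀ v ∈ K, 0 ≤ ⟪F p (x₁ p) (u₁ p), v - u₁ p⟫)
    (hvi₂ : ∀ᵐ p ∂μ, ∀ v ∈ K, 0 ≤ ⟪F p (x₂ p) (u₂ p), v - u₂ p⟫)
    (ρ : ℝ) (hρ0 : 0 < ρ) (hρ : ρ < 2 * C / L_F ^ 2)
    (t : ℝ) (ht : t ∈ Set.Icc (0 : ℝ) T) :
    ∫ p in Set.Icc 0 t ×ˢ (Set.univ : Set Ω), ‖u₁ p - u₂ p‖ ^ 2 ∂μ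
      ≤ ρ ^ 2 * L_F ^ 2 / (1 - Real.sqrt (1 - 2 * ρ * C + ρ ^ 2 * L_F ^ 2)) ^ 2
        * ∫ p in Set.Icc 0 t ×ˢ (Set.univ : Set Ω), ‖x₁ p - x₂ p‖ ^ 2 ∂μ :=
  stmt_10_general K μ F C L_F hC hCL hLip hmono x₁ x₂ hx₁ hx₂ u₁ u₂ hu₁K hu₂K hvi₁ hvi₂ ρ hρ0 hρ t
end

section
/- Let H₁, H₂ be real Hilbert spaces, K ⊆ H₂ nonempty, closed and convex, T > 0, and F : [0, T] × H₁ × H₂ → H₂ a mapping with constants 0 < C ≤ L such that ‖F(t₁, x₁, u₁) − F(t₂, x₂, u₂)‖ ≤ L (|t₁ − t₂| + ‖x₁ − x₂‖ + ‖u₁ − u₂‖) for all t₁, t₂ ∈ [0, T], x₁, x₂ ∈ H₁, u₁, u₂ ∈ H₂, and ⟨F(t, x, u₁) − F(t, x, u₂), u₁ − u₂⟩ ≥ C ‖u₁ − u₂‖² for all t ∈ [0, T], x ∈ H₁, u₁, u₂ ∈ H₂. For each (t, x) ∈ [0, T] × H₁ let u(t, x) ∈ K denote the unique solution of ⟨F(t,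 x, u(t, x)), v − u(t, x)⟩ ≥ 0 for all v ∈ K. Then for every ρ with 0 < ρ < 2C/L² and all (t₁, x₁), (t₂, x₂) ∈ [0, T] × H₁, ‖u(t₁, x₁) − u(t₂, x₂)‖ ≤ M (|t₁ − t₂| + ‖x₁ − x₂‖), where M = √2 ρL / (1 − √(1 − 2ρC + ρ²L²)). -/
open scoped RealInnerProductSpace

set_option maxHeartbeats 1000000 in
/-- Joint Lipschitz dependence of the solution of a time- and state-parametrized
variational inequality: with `F : [0,T] × H₁ × H₂ → H₂` jointly `L`-Lipschitz and
`C`-strongly monotone in the last variable (`0 < C ≤ L`), and `u(t, x) ∈ K` the unique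
solution of `⟨F(t, x, u(t,x)), v − u(t,x)⟩ ≥ 0` for all `v ∈ K`, then for every
`0 < ρ < 2C/L²`: `‖u(t₁,x₁) − u(t₂,x₂)‖ ≤ M (|t₁ − t₂| + ‖x₁ − x₂‖)` where
`M = √2 ρL / (1 − √(1 − 2ρC + ρ²L²))`. -/
theorem stmt_11 {H₁ H₂ : Type*}
    [NormedAddCommGroup H₁] [InnerProductSpace ℝ H₁] [CompleteSpace H₁]
    [NormedAddCommGroup H₂] [InnerProductSpace ℝ H₂] [CompleteSpace H₂]
    (K : Set H₂) (hKne : K.Nonempty) (hKcl : IsClosed K) (hKcv : Convex ℝ K)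
    (T : ℝ) (hT : 0 < T)
    (F : ℝ → H₁ → H₂ → H₂) (L C : ℝ) (hC : 0 < C) (hCL : C ≤ L)
    (hLip : ∀ t₁ ∈ Set.Icc (0 : ℝ) T, ∀ t₂ ∈ Set.Icc (0 : ℝ) T,
      ∀ (x₁ x₂ : H₁) (u₁ u₂ : H₂),
      ‖F t₁ x₁ u₁ - F t₂ x₂ u₂‖ ≤ L * (|t₁ - t₂| + ‖x₁ - x₂‖ + ‖u₁ - u₂‖))
    (hmono : ∀ t ∈ Set.Icc (0 : ℝ) T, ∀ (x : H₁) (u₁ u₂ : H₂),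
      C * ‖u₁ - u₂‖ ^ 2 ≤ ⟪F t x u₁ - F t x u₂, u₁ - u₂⟫)
    (u : ℝ → H₁ → H₂)
    (hu : ∀ t ∈ Set.Icc (0 : ℝ) T, ∀ x : H₁,
      u t x ∈ K ∧ ∀ v ∈ K, 0 ≤ ⟪F t x (u t x), v - u t x⟫)
    (ρ : ℝ) (hρ0 : 0 < ρ) (hρ : ρ < 2 * C / L ^ 2)
    (t₁ : ℝ) (ht₁ : t₁ ∈ Set.Icc (0 : ℝ) T) (t₂ : ℝ) (ht₂ : t₂ ∈ Set.Icc (0 : ℝ) T)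
    (x₁ x₂ : H₁) :
    ‖u t₁ x₁ - u t₂ x₂‖
      ≤ Real.sqrt 2 * ρ * L / (1 - Real.sqrt (1 - 2 * ρ * C + ρ ^ 2 * L ^ 2))
        * (|t₁ - t₂| + ‖x₁ - x₂‖) := by
  have hL : 0 < L := lt_of_lt_of_le hC hCL
  set u₁ := u t₁ x₁
  set u₂ := u t₂ x₂
  set d := u₁ - u₂ with hd
  set δ := |t₁ - t₂| + ‖x₁ - x₂‖ with hδ
  have hδ0 : 0 ≤ δ := add_nonneg (abs_nonneg _) (norm_nonneg _)
  -- step 1 : ‖d‖ ≤ (L/C) * δ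
  have h1 : 0 ≤ ⟪F t₁ x₁ u₁, u₂ - u₁⟫ := (hu t₁ ht₁ x₁).2 u₂ (hu t₂ ht₂ x₂).1
  have h2 : 0 ≤ ⟪F t₂ x₂ u₂, u₁ - u₂⟫ := (hu t₂ ht₂ x₂).2 u₁ (hu t₁ ht₁ x₁).1
  have hmon : C * ‖d‖ ^ 2 ≤ ⟪F t₁ x₁ u₁ - F t₁ x₁ u₂, d⟫ := hmono t₁ ht₁ x₁ u₁ u₂
  have hcomb : ⟪F t₁ x₁ u₁ - F t₂ x₂ u₂, d⟫ ≤ 0 := by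
    have : ⟪F t₁ x₁ u₁, u₂ - u₁⟫ = - ⟪F t₁ x₁ u₁, d⟫ := by
      rw [hd, ← inner_neg_right]; congr 1; abel
    rw [inner_sub_left]
    have h2' : 0 ≤ ⟪F t₂ x₂ u₂, d⟫ := h2
    linarith [h1, this ▸ h1]
  have hsplit : ⟪F t₁ x₁ u₁ - F t₁ x₁ u₂, d⟫
      = ⟪F t₁ x₁ u₁ - F t₂ x₂ u₂, d⟫ + ⟪F t₂ x₂ u₂ - F t₁ x₁ u₂, d⟫ := by
    rw [← inner_add_left]; congr 1; abel
  have hlipnorm : ‖F t₂ x₂ u₂ - F t₁ x₁ u₂‖ ≤ L * δ := by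
    have := hLip t₂ ht₂ t₁ ht₁ x₂ x₁ u₂ u₂
    simp only [sub_self, norm_zero, add_zero] at this
    calc ‖F t₂ x₂ u₂ - F t₁ x₁ u₂‖ ≤ L * (|t₂ - t₁| + ‖x₂ - x₁‖) := this
      _ = L * δ := by rw [hδ, abs_sub_comm, norm_sub_rev]
  have hinner : ⟪F t₂ x₂ u₂ - F t₁ x₁ u₂, d⟫ ≤ L * δ * ‖d‖ :=
    le_trans (real_inner_le_norm _ _) (mul_le_mul_of_nonneg_right hlipnorm (norm_nonneg _))
  have key : C * ‖d‖ ^ 2 ≤ L * δ * ‖d‖ := by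
    calc C * ‖d‖ ^ 2 ≤ ⟪F t₁ x₁ u₁ - F t₁ x₁ u₂, d⟫ := hmon
      _ ≤ ⟪F t₂ x₂ u₂ - F t₁ x₁ u₂, d⟫ := by rw [hsplit]; linarith
      _ ≤ L * δ * ‖d‖ := hinner
  have hstep1 : ‖d‖ ≤ L / C * δ := by
    rcases eq_or_lt_of_le (norm_nonneg d) with h0 | h0
    · rw [← h0]; positivity
    · rw [div_mul_eq_mul_div, le_div_iff₀ hC]
      nlinarith [key]
  -- step 2 : L / C ≤ M
  set θ := Real.sqrt (1 - 2 * ρ * C + ρ ^ 2 * L ^ 2) with hθ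
  have hρL : ρ * L ^ 2 < 2 * C := by
    have := (lt_div_iff₀ (by positivity : (0:ℝ) < L ^ 2)).mp hρ
    nlinarith [this]
  have hθ0 : 0 ≤ θ := Real.sqrt_nonneg _
  have hLC : C ^ 2 ≤ L ^ 2 := by nlinarith [hC, hCL]
  have hval0 : 0 ≤ 1 - 2 * ρ * C + ρ ^ 2 * L ^ 2 := by
    nlinarith [sq_nonneg (1 - ρ * C), mul_le_mul_of_nonneg_left hLC (sq_nonneg ρ)]
  have hθ1 : θ < 1 := by
    rw [hθ, Real.sqrt_lt' one_pos]
    nlinarith [mul_lt_mul_of_pos_left hρL hρ0]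
  have hs2 : Real.sqrt 2 ^ 2 = 2 := Real.sq_sqrt (by norm_num)
  have hs2pos : (1:ℝ) ≤ Real.sqrt 2 := by
    nlinarith [Real.sqrt_nonneg 2, hs2]
  have hkey2 : 1 - θ ≤ Real.sqrt 2 * ρ * C := by
    by_cases hcase : 1 ≤ Real.sqrt 2 * ρ * C
    · linarith
    · push_neg at hcase
      have hρC : ρ * C < 1 / Real.sqrt 2 := by
        rw [lt_div_iff₀ (by linarith : (0:ℝ) < Real.sqrt 2)]
        linarith [hcase]
      have hsq : (1 - Real.sqrt 2 * ρ * C) ^ 2 ≤ 1 - 2 * ρ * C + ρ ^ 2 * L ^ 2 := by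
        have hs43 : (4:ℝ)/3 ≤ Real.sqrt 2 := by nlinarith [Real.sqrt_nonneg 2, hs2]
        have hρC2 : ρ * C * Real.sqrt 2 < 1 := by nlinarith [hcase]
        have h2s : 2 * (ρ * C) < Real.sqrt 2 := by
          nlinarith [mul_lt_mul_of_pos_left hρC2 (show (0:ℝ) < Real.sqrt 2 by linarith), hs2]
        have hρCle : ρ * C < 2 * Real.sqrt 2 - 2 := by linarith
        have hp1 : 0 ≤ ρ ^ 2 * L ^ 2 - ρ ^ 2 * C ^ 2 := by
          nlinarith [mul_le_mul_of_nonneg_left hLC (sq_nonneg ρ)]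
        have hp2 : 0 ≤ (ρ * C) * (2 * Real.sqrt 2 - 2 - ρ * C) :=
          le_of_lt (mul_pos (mul_pos hρ0 hC) (by linarith))
        have hss : Real.sqrt 2 ^ 2 * (ρ * C) ^ 2 = 2 * (ρ * C) ^ 2 := by rw [hs2]
        nlinarith [hp1, hp2, hss]
      have : 1 - Real.sqrt 2 * ρ * C ≤ θ := by
        rw [hθ]
        exact (Real.le_sqrt (by linarith) hval0).mpr hsq
      linarith
  have hden : 0 < 1 - θ := by linarith
  have hM : L / C ≤ Real.sqrt 2 * ρ * L / (1 - θ) := by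
    rw [div_le_div_iff₀ hC hden]
    have : (1 - θ) * L ≤ Real.sqrt 2 * ρ * C * L :=
      mul_le_mul_of_nonneg_right hkey2 (le_of_lt hL)
    nlinarith [this]
  calc ‖d‖ ≤ L / C * δ := hstep1
    _ ≤ Real.sqrt 2 * ρ * L / (1 - θ) * δ := mul_le_mul_of_nonneg_right hM hδ0
end

section
/- Let H₁, H₂ be real Hilbert spaces, K ⊆ H₂ nonempty, closed and convex, T > 0, and F : [0, T] × H₁ × H₂ → H₂ a mapping with constants 0 < C ≤ L such that ‖F(t₁, x₁, u₁) − F(t₂, x₂, u₂)‖ ≤ L (|t₁ − t₂| + ‖x₁ − x₂‖ + ‖u₁ − u₂‖) for all t₁, t₂ ∈ [0, T], x₁, x₂ ∈ H₁, u₁, u₂ ∈ H₂, and ⟨F(t, x, u₁) − F(t, x, u₂), u₁ − u₂⟩ ≥ C ‖u₁ − u₂‖² for all t ∈ [0, T], x ∈ H₁, u₁, u₂ ∈ H₂. For each (t, x) let u(t, x) ∈ K denote the unique solution of ⟨F(t, x, u(t, x)), v − u(t, x)⟩ ≥ 0 for all v ∈ K. Then there exists a constant M ≥ 0 such that ‖u(t,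 x)‖ ≤ M (1 + ‖x‖) for all t ∈ [0, T] and all x ∈ H₁. -/
open scoped RealInnerProductSpace

/-- Linear growth bound for the solution of a time- and state-parametrized variational
inequality: with `F : [0,T] × H₁ × H₂ → H₂` jointly `L`-Lipschitz and `C`-strongly
monotone in the last variable (`0 < C ≤ L`), and `u(t, x) ∈ K` the unique solution of
`⟨F(t, x, u(t,x)), v − u(t,x)⟩ ≥ 0` for all `v ∈ K`, there exists `M ≥ 0` with
`‖u(t, x)‖ ≤ M (1 + ‖x‖)` for all `t ∈ [0, T]` and `x ∈ H₁`. -/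
theorem stmt_12 {H₁ H₂ : Type*}
    [NormedAddCommGroup H₁] [InnerProductSpace ℝ H₁] [CompleteSpace H₁]
    [NormedAddCommGroup H₂] [InnerProductSpace ℝ H₂] [CompleteSpace H₂]
    (K : Set H₂) (hKne : K.Nonempty) (hKcl : IsClosed K) (hKcv : Convex ℝ K)
    (T : ℝ) (hT : 0 < T)
    (F : ℝ → H₁ → H₂ → H₂) (L C : ℝ) (hC : 0 < C) (hCL : C ≤ L)
    (hLip : ∀ t₁ ∈ Set.Icc (0 : ℝ) T, ∀ t₂ ∈ Set.Icc (0 : ℝ) T,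
      ∀ (x₁ x₂ : H₁) (u₁ u₂ : H₂),
      ‖F t₁ x₁ u₁ - F t₂ x₂ u₂‖ ≤ L * (|t₁ - t₂| + ‖x₁ - x₂‖ + ‖u₁ - u₂‖))
    (hmono : ∀ t ∈ Set.Icc (0 : ℝ) T, ∀ (x : H₁) (u₁ u₂ : H₂),
      C * ‖u₁ - u₂‖ ^ 2 ≤ ⟪F t x u₁ - F t x u₂, u₁ - u₂⟫)
    (u : ℝ → H₁ → H₂)
    (hu : ∀ t ∈ Set.Icc (0 : ℝ) T, ∀ x : H₁,
      u t x ∈ K ∧ ∀ v ∈ K, 0 ≤ ⟪F t x (u t x), v - u t x⟫) :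
    ∃ M : ℝ, 0 ≤ M ∧ ∀ t ∈ Set.Icc (0 : ℝ) T, ∀ x : H₁,
      ‖u t x‖ ≤ M * (1 + ‖x‖) := by
  have h0mem : (0 : ℝ) ∈ Set.Icc (0 : ℝ) T := ⟨le_rfl, hT.le⟩
  obtain ⟨hu0K, hu0ineq⟩ := hu 0 h0mem 0
  set u₀ := u 0 0 with hu₀
  have hLpos : 0 < L := hC.trans_le hCL
  have hLCnn : 0 ≤ L / C := div_nonneg hLpos.le hC.le
  refine ⟨‖u₀‖ + (L / C) * (T + 1), by nlinarith [norm_nonneg u₀], ?_⟩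
  intro t ht x
  obtain ⟨huK, huineq⟩ := hu t ht x
  set d := u t x - u₀ with hd
  -- strong monotonicity
  have hm : C * ‖d‖ ^ 2 ≤ ⟪F t x (u t x) - F t x u₀, d⟫ := hmono t ht x _ _
  have ha : 0 ≤ ⟪F t x (u t x), u₀ - u t x⟫ := huineq u₀ hu0K
  have hb : 0 ≤ ⟪F 0 0 u₀, u t x - u₀⟫ := hu0ineq (u t x) huK
  have hsum : C * ‖d‖ ^ 2 ≤ ⟪F 0 0 u₀ - F t x u₀, d⟫ := by
    have key : ⟪F t x (u t x) - F t x u₀, d⟫ + ⟪F t x (u t x), u₀ - u t x⟫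
        + ⟪F 0 0 u₀, u t x - u₀⟫ = ⟪F 0 0 u₀ - F t x u₀, d⟫ := by
      simp only [hd, inner_sub_left, inner_sub_right]
      ring
    linarith
  have hcs : ⟪F 0 0 u₀ - F t x u₀, d⟫ ≤ ‖F 0 0 u₀ - F t x u₀‖ * ‖d‖ :=
    real_inner_le_norm _ _
  have hlip : ‖F 0 0 u₀ - F t x u₀‖ ≤ L * (T + ‖x‖) := by
    have := hLip 0 h0mem t ht 0 x u₀ u₀
    have habs : |(0 : ℝ) - t| ≤ T := by
      rw [zero_sub, abs_neg, abs_of_nonneg ht.1]; exact ht.2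
    have hx : ‖(0 : H₁) - x‖ = ‖x‖ := by simp
    calc ‖F 0 0 u₀ - F t x u₀‖ ≤ L * (|(0:ℝ) - t| + ‖(0:H₁) - x‖ + ‖u₀ - u₀‖) := this
      _ ≤ L * (T + ‖x‖) := by
          rw [hx]; simp only [sub_self, norm_zero, add_zero]
          exact mul_le_mul_of_nonneg_left (by linarith) hLpos.le
  have hdn : 0 ≤ ‖d‖ := norm_nonneg _
  have hkey : C * ‖d‖ ^ 2 ≤ L * (T + ‖x‖) * ‖d‖ := by
    calc C * ‖d‖ ^ 2 ≤ ‖F 0 0 u₀ - F t x u₀‖ * ‖d‖ := le_trans hsum hcs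
      _ ≤ L * (T + ‖x‖) * ‖d‖ := mul_le_mul_of_nonneg_right hlip hdn
  have hdbound : ‖d‖ ≤ (L / C) * (T + ‖x‖) := by
    rcases eq_or_lt_of_le hdn with h | h
    · rw [← h]; exact mul_nonneg hLCnn (by linarith [norm_nonneg x])
    · rw [div_mul_eq_mul_div, le_div_iff₀ hC]
      nlinarith
  have htri : ‖u t x‖ ≤ ‖u₀‖ + ‖d‖ := by
    have : u t x = u₀ + d := by simp [hd]
    rw [this]; exact norm_add_le _ _
  have hLC : 1 ≤ L / C := (one_le_div hC).mpr hCL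
  have hxn : 0 ≤ ‖x‖ := norm_nonneg _
  have hu₀n : 0 ≤ ‖u₀‖ := norm_nonneg _
  nlinarith [mul_nonneg (mul_nonneg (by linarith : (0:ℝ) ≤ L / C) hT.le) hxn]
end
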